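/- arXiv:1307.1853 — 3 statements merged into one kernel-verified Lean document; each statement's English description precedes it below -/
import Mathlib

section
/- If A₁, A₂, A₃ are pairwise anti-commuting 4×4 real matrices each squaring to minus the identity, then the real matrix algebra generated by A₁, A₂, A₃ acts irreducibly on ℝ⁴, i.e., the only subspaces of ℝ⁴ invariant under all Aᵢ are {0} and ℝ⁴. -/
theorem stmt_2 (A : Fin 3 → Matrix (Fin 4) (Fin 4) ℝ)
    (hsq : ∀ i, A i * A i = -1)
    (hanti : ∀ i j, i ≠ j → A i * A j = -(A j * A i))
    (V : Submodule ℝ (Fin 4 → ℝ))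
    (hinv : ∀ i, ∀ v ∈ V, (A i).mulVec v ∈ V)
    (hne : V ≠ ⊥) :
    V = ⊤ := by
  obtain ⟨v, hvV, hv0⟩ := Submodule.exists_mem_ne_zero_of_ne_bot hne
  set A0 := A 0 with hA0
  set A1 := A 1 with hA1
  set B := A0 * A1 with hBdef
  have h00 : A0 * A0 = -1 := hsq 0
  have h11 : A1 * A1 = -1 := hsq 1
  have h10 : A1 * A0 = -B := by
    rw [hBdef]; exact hanti 1 0 (by decide)
  have hBB : B * B = -1 := by
    calc B * B = A0 * (A1 * A0) * A1 := by rw [hBdef]; noncomm_ring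
    _ = -1 := by rw [h10, hBdef]; noncomm_ring [h00, h11]
  have h0B : A0 * B = -A1 := by
    rw [hBdef, ← mul_assoc, h00]; noncomm_ring
  have hB0 : B * A0 = A1 := by
    calc B * A0 = A0 * (A1 * A0) := by rw [hBdef, mul_assoc]
    _ = -(A0 * B) := by rw [h10]; noncomm_ring
    _ = A1 := by rw [h0B, neg_neg]
  have h1B : A1 * B = A0 := by
    rw [hBdef, ← mul_assoc, h10, hBdef]; noncomm_ring [h00, h11]
  have hB1 : B * A1 = -A0 := by
    rw [hBdef, mul_assoc, h11]; noncomm_ring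
  -- the four vectors
  set w : Fin 4 → (Fin 4 → ℝ) := ![v, A0.mulVec v, A1.mulVec v, B.mulVec v] with hw
  have hmem : ∀ i, w i ∈ V := by
    intro i
    fin_cases i
    · exact hvV
    · exact hinv 0 v hvV
    · exact hinv 1 v hvV
    · show B.mulVec v ∈ V
      rw [hBdef, ← Matrix.mulVec_mulVec]
      exact hinv 0 _ (hinv 1 v hvV)
  have hLI : LinearIndependent ℝ w := by
    rw [Fintype.linearIndependent_iff]
    intro g hg
    set M : Matrix (Fin 4) (Fin 4) ℝ := g 0 • 1 + g 1 • A0 + g 2 • A1 + g 3 • B with hM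
    set N : Matrix (Fin 4) (Fin 4) ℝ := g 0 • 1 - g 1 • A0 - g 2 • A1 - g 3 • B with hN
    have hMv : M.mulVec v = 0 := by
      have : ∑ i, g i • w i = 0 := hg
      simp [hw, Fin.sum_univ_four] at this
      rw [hM]
      simp [Matrix.add_mulVec, Matrix.smul_mulVec, Matrix.one_mulVec]
      convert this using 2
    have hNM : N * M = (g 0 ^ 2 + g 1 ^ 2 + g 2 ^ 2 + g 3 ^ 2) • (1 : Matrix (Fin 4) (Fin 4) ℝ) := by
      rw [hM, hN]
      simp only [mul_add, add_mul, sub_mul, mul_sub, smul_mul_assoc, Algebra.mul_smul_comm,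
        smul_smul, h00, h11, hBB, h10, h0B, hB0, h1B, hB1, one_mul, mul_one,
        smul_neg, smul_add, smul_sub]
      module
    have hsum : (g 0 ^ 2 + g 1 ^ 2 + g 2 ^ 2 + g 3 ^ 2) • v = 0 := by
      have := congrArg (fun (X : Matrix (Fin 4) (Fin 4) ℝ) => X.mulVec v) hNM
      simp only [Matrix.smul_mulVec, Matrix.one_mulVec] at this
      rw [← Matrix.mulVec_mulVec, hMv, Matrix.mulVec_zero] at this
      exact this.symm
    have hs0 : g 0 ^ 2 + g 1 ^ 2 + g 2 ^ 2 + g 3 ^ 2 = 0 :=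
      (smul_eq_zero.mp hsum).resolve_right hv0
    have e0 : g 0 = 0 := by nlinarith [sq_nonneg (g 0), sq_nonneg (g 1), sq_nonneg (g 2), sq_nonneg (g 3)]
    have e1 : g 1 = 0 := by nlinarith [sq_nonneg (g 0), sq_nonneg (g 1), sq_nonneg (g 2), sq_nonneg (g 3)]
    have e2 : g 2 = 0 := by nlinarith [sq_nonneg (g 0), sq_nonneg (g 1), sq_nonneg (g 2), sq_nonneg (g 3)]
    have e3 : g 3 = 0 := by nlinarith [sq_nonneg (g 0), sq_nonneg (g 1), sq_nonneg (g 2), sq_nonneg (g 3)]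
    intro i
    fin_cases i
    · exact e0
    · exact e1
    · exact e2
    · exact e3
  have hspan : Submodule.span ℝ (Set.range w) ≤ V := by
    rw [Submodule.span_le]
    rintro x ⟨i, rfl⟩
    exact hmem i
  have hfr : Module.finrank ℝ (Submodule.span ℝ (Set.range w)) = 4 := by
    rw [finrank_span_eq_card hLI]
    simp
  have h4le : 4 ≤ Module.finrank ℝ V := by
    calc 4 = Module.finrank ℝ (Submodule.span ℝ (Set.range w)) := hfr.symm
    _ ≤ Module.finrank ℝ V := Submodule.finrank_mono hspan
  have hle4 : Module.finrank ℝ V ≤ 4 := by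
    have := Submodule.finrank_le V
    simpa using this
  exact Submodule.eq_top_of_finrank_eq (by
    have : Module.finrank ℝ V = 4 := le_antisymm hle4 h4le
    simp [this])
end

section
/- There do not exist five pairwise anti-commuting 4×4 real matrices A₁,…,A₅ all squaring to +I (i.e., a real Clifford representation of Euclidean signature (5,0) on ℝ⁴ does not exist). -/
/-!
Four pairwise anticommuting involutions `e₀, …, e₃` already suffice for a contradiction.
The six bivectors `eᵢeⱼ` and the trivector `e₀e₁e₂` square to `-1`, and the product of any two
distinct ones anticommutes with some `eₖ`, hence is traceless. So `X ↦ tr (X * X)` is negative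
definite on their 7-dimensional span, while it is nonnegative on symmetric matrices, where it is
`tr (Xᵀ * X)`. Hence a negative definite subspace meets the symmetric matrices trivially, and
`X ↦ (Xᵢⱼ - Xⱼᵢ)_{i<j}` embeds it into `ℝ⁶`; but `7 > 6`.
-/

open Matrix

section TraceForm

variable {n : Type*}

theorem Matrix.trace_mul_self_nonneg_of_isSymm [Fintype n] {X : Matrix n n ℝ} (hX : X.IsSymm) :
    0 ≤ (X * X).trace := by
  have h := (posSemidef_conjTranspose_mul_self X).trace_nonneg
  rwa [conjTranspose_eq_transpose_of_trivial, hX.eq] at h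

theorem Matrix.trace_sum_smul_mul_self {R ι : Type*} [Fintype n] [CommRing R] [Fintype ι]
    (f : ι → Matrix n n R) (horth : ∀ i j, i ≠ j → (f i * f j).trace = 0) (c : ι → R) :
    ((∑ i, c i • f i) * ∑ i, c i • f i).trace = ∑ i, c i ^ 2 * (f i * f i).trace := by
  classical
  simp only [Finset.sum_mul, Finset.mul_sum, trace_sum, smul_mul_smul_comm, trace_smul,
    smul_eq_mul]
  refine Finset.sum_congr rfl fun i _ => ?_
  rw [Finset.sum_eq_single i (fun j _ hji => by rw [horth j i hji, mul_zero]) (by simp), sq]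

variable [LinearOrder n]

def Matrix.skewUpper : Matrix n n ℝ →ₗ[ℝ] ({p : n × n // p.1 < p.2} → ℝ) where
  toFun X p := X p.1.1 p.1.2 - X p.1.2 p.1.1
  map_add' X Y := by ext p; simp only [add_apply, Pi.add_apply]; ring
  map_smul' r X := by
    ext p; simp only [smul_apply, smul_eq_mul, RingHom.id_apply, Pi.smul_apply]; ring

theorem Matrix.isSymm_of_skewUpper_eq_zero {X : Matrix n n ℝ} (hX : skewUpper X = 0) :
    X.IsSymm := by
  have hlt : ∀ i j : n, i < j → X i j = X j i := fun i j hij =>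
    sub_eq_zero.mp (congrFun hX ⟨(i, j), hij⟩)
  refine IsSymm.ext fun i j => ?_
  rcases lt_trichotomy i j with h | rfl | h
  · exact (hlt i j h).symm
  · rfl
  · exact hlt j i h

theorem Matrix.card_le_of_trace_mul_orthogonal_neg [Fintype n] {ι : Type*} [Fintype ι]
    (f : ι → Matrix n n ℝ) (horth : ∀ i j, i ≠ j → (f i * f j).trace = 0)
    (hneg : ∀ i, (f i * f i).trace < 0) :
    Fintype.card ι ≤ Fintype.card {p : n × n // p.1 < p.2} := by
  suffices LinearIndependent ℝ (skewUpper ∘ f) by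
    simpa using this.fintype_card_le_finrank
  rw [Fintype.linearIndependent_iff]
  intro c hc
  have hsymm : (∑ i, c i • f i).IsSymm :=
    isSymm_of_skewUpper_eq_zero (by simpa [map_sum] using hc)
  have hterm : ∀ i ∈ Finset.univ, c i ^ 2 * (f i * f i).trace ≤ 0 := fun i _ =>
    mul_nonpos_of_nonneg_of_nonpos (sq_nonneg _) (hneg i).le
  have hsum : ∑ i, c i ^ 2 * (f i * f i).trace = 0 :=
    le_antisymm (Finset.sum_nonpos hterm)
      (trace_sum_smul_mul_self f horth c ▸ trace_mul_self_nonneg_of_isSymm hsymm)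
  intro i
  have hi := (Finset.sum_eq_zero_iff_of_nonpos hterm).mp hsum i (Finset.mem_univ i)
  exact pow_eq_zero_iff two_ne_zero |>.mp ((mul_eq_zero.mp hi).resolve_right (hneg i).ne)

end TraceForm

theorem Matrix.trace_eq_zero_of_mul_eq_neg_mul {n R : Type*} [Fintype n] [DecidableEq n]
    [CommRing R] [IsAddTorsionFree R] {P X : Matrix n n R} (hP : P * P = 1)
    (h : P * X = -(X * P)) : X.trace = 0 := by
  have hconj : (P * X * P).trace = X.trace := by rw [trace_mul_cycle, hP, one_mul]
  rw [h, neg_mul, mul_assoc, hP, mul_one, trace_neg] at hconj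
  exact self_eq_neg.mp hconj.symm

section AnticommutingInvolutions

variable {ι R : Type*} [Ring R] {e : ι → R}

theorem mul_mul_cancel_of_mul_self_eq_one (hsq : ∀ i, e i * e i = 1) (i : ι) (x : R) :
    e i * (e i * x) = x := by
  rw [← mul_assoc, hsq, one_mul]

theorem mul_eq_neg_mul_of_lt [LinearOrder ι] (hanti : ∀ i j, i ≠ j → e i * e j = -(e j * e i))
    {i j : ι} (h : j < i) : e i * e j = -(e j * e i) :=
  hanti i j h.ne'

theorem mul_mul_eq_neg_mul_mul_of_lt [LinearOrder ι]
    (hanti : ∀ i j, i ≠ j → e i * e j = -(e j * e i)) {i j : ι} (h : j < i) (x : R) :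
    e i * (e j * x) = -(e j * (e i * x)) := by
  rw [← mul_assoc, mul_eq_neg_mul_of_lt hanti h, neg_mul, mul_assoc]

end AnticommutingInvolutions

section Clifford

variable {R : Type*} [Ring R]

def bivectorsAndTrivector (e : Fin 4 → R) : Fin 7 → R :=
  ![e 0 * e 1, e 0 * e 2, e 0 * e 3, e 1 * e 2, e 1 * e 3, e 2 * e 3, e 0 * e 1 * e 2]

variable {e : Fin 4 → R}

theorem bivectorsAndTrivector_mul_self (hsq : ∀ i, e i * e i = 1)
    (hanti : ∀ i j, i ≠ j → e i * e j = -(e j * e i)) (i : Fin 7) :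
    bivectorsAndTrivector e i * bivectorsAndTrivector e i = -1 := by
  fin_cases i <;>
    simp [bivectorsAndTrivector, mul_assoc, hsq, mul_mul_eq_neg_mul_mul_of_lt hanti]

/- `simp` sorts each word by increasing index, which decides the `k`-th disjunct. -/
theorem exists_anticommute_bivectorsAndTrivector_mul (hsq : ∀ i, e i * e i = 1)
    (hanti : ∀ i j, i ≠ j → e i * e j = -(e j * e i)) {i j : Fin 7} (hij : i ≠ j) :
    ∃ k, e k * (bivectorsAndTrivector e i * bivectorsAndTrivector e j) =
      -(bivectorsAndTrivector e i * bivectorsAndTrivector e j * e k) := by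
  simp only [Fin.exists_fin_succ, Fin.exists_fin_zero]
  fin_cases i <;> fin_cases j <;> simp at hij <;>
    simp [bivectorsAndTrivector, mul_assoc, hsq, mul_mul_cancel_of_mul_self_eq_one hsq,
      mul_eq_neg_mul_of_lt hanti, mul_mul_eq_neg_mul_mul_of_lt hanti]

end Clifford

theorem Matrix.seven_le_card_strictUpper_of_anticommuting_involutions {n : Type*} [Fintype n]
    [LinearOrder n] [Nonempty n] (e : Fin 4 → Matrix n n ℝ) (hsq : ∀ i, e i * e i = 1)
    (hanti : ∀ i j, i ≠ j → e i * e j = -(e j * e i)) :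
    7 ≤ Fintype.card {p : n × n // p.1 < p.2} := by
  simpa using card_le_of_trace_mul_orthogonal_neg (bivectorsAndTrivector e)
    (fun i j hij => by
      obtain ⟨k, hk⟩ := exists_anticommute_bivectorsAndTrivector_mul hsq hanti hij
      exact trace_eq_zero_of_mul_eq_neg_mul (hsq k) hk)
    (fun i => by
      rw [bivectorsAndTrivector_mul_self hsq hanti, trace_neg, trace_one, neg_lt_zero]
      exact_mod_cast Fintype.card_pos)

theorem stmt_6 :
    ¬ ∃ A : Fin 5 → Matrix (Fin 4) (Fin 4) ℝ,
      (∀ i, A i * A i = 1) ∧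
      (∀ i j, i ≠ j → A i * A j = -(A j * A i)) := by
  rintro ⟨A, hsq, hanti⟩
  have h := seven_le_card_strictUpper_of_anticommuting_involutions (A ∘ Fin.castSucc)
    (fun i => hsq _) (fun i j hij => hanti _ _ (Fin.castSucc_injective _ |>.ne hij))
  exact absurd h (by decide)
end

section
/- For any p ∈ ℝ³ and m ≥ 0 with E_p = √(|p|² + m²), the 2×2 block operator matrix [[√((E_p+m)/(2E_p)), -√((E_p-m)/(2E_p))·(p·γ)γ⁰/|p|], [√((E_p-m)/(2E_p))·(p·γ)γ⁰/|p|, √((E_p+m)/(2E_p))]] (entries being 4×4 real matrices in a Majorana basis, with p ≠ 0) is an orthogonal 8×8 real matrix. -/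
/-!
Write `S = ∑ pₖ iγᵏ`, so that `C = -S iγ⁰`. The Clifford relations say that the `iγᵏ` square to `1`
and anticommute with each other and with `iγ⁰`, and that `(iγ⁰)² = -1`; hence `S² = |p|²` and
`C² = |p|²`. An orthogonal matrix squaring to `±1` equals `±` its transpose, so `iγ⁰` is
antisymmetric and the `iγᵏ` are symmetric, which makes `C` symmetric. The block matrix is thus
`[[a, -K], [K, a]]` with `K = (b/|p|) C` symmetric and `a² + K² = (a² + b²) 1 = 1`.
-/

open Matrix

namespace Matrix

variable {n R : Type*} [Fintype n] [DecidableEq n] [CommRing R]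

theorem transpose_fromBlocks_rotation_mul_self (a : R) (K : Matrix n n R) (hK : Kᵀ = K)
    (h : a ^ 2 • (1 : Matrix n n R) + K * K = 1) :
    (fromBlocks (a • 1) (-K) K (a • 1))ᵀ * fromBlocks (a • 1) (-K) K (a • 1) = 1 := by
  have hsq : a • (1 : Matrix n n R) * a • 1 = a ^ 2 • 1 := by rw [smul_mul_smul_comm, one_mul, sq]
  rw [fromBlocks_transpose, fromBlocks_multiply]
  simp only [transpose_smul, transpose_one, transpose_neg, hK, hsq, smul_one_mul, mul_smul_one,
    mul_neg, neg_mul, smul_neg, neg_neg, neg_add_cancel]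
  rw [add_comm (K * K), h, fromBlocks_one]

end Matrix

theorem neg_mul_self_of_anticomm {R : Type*} [Ring R] {X Y : R} (h : Y * X = -(X * Y)) :
    -(Y * X) * -(Y * X) = -(Y * Y * (X * X)) := by
  have h' : X * Y = -(Y * X) := by rw [h, neg_neg]
  rw [neg_mul_neg, mul_assoc, ← mul_assoc X, h', neg_mul, mul_neg]
  simp only [mul_assoc]

section AnticommutingFamily

variable {ι R : Type*} [Fintype ι] [Ring R] [Algebra ℝ R] (B : ι → R) (p : ι → ℝ)

theorem sum_smul_mul_self_of_anticomm [DecidableEq ι]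
    (hB : ∀ i j, B i * B j + B j * B i = (if i = j then 2 else 0 : ℝ) • 1) :
    (∑ i, p i • B i) * (∑ i, p i • B i) = (∑ i, p i ^ 2) • 1 := by
  have hexp : (∑ i, p i • B i) * (∑ i, p i • B i) = ∑ i, ∑ j, (p i * p j) • (B i * B j) := by
    rw [Finset.sum_mul]
    simp_rw [Finset.mul_sum, smul_mul_smul_comm]
  have hexp' : (∑ i, p i • B i) * (∑ i, p i • B i) = ∑ i, ∑ j, (p i * p j) • (B j * B i) := by
    rw [hexp, Finset.sum_comm]
    exact Finset.sum_congr rfl fun i _ => Finset.sum_congr rfl fun j _ => by rw [mul_comm (p j)]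
  refine smul_right_injective R (two_ne_zero (α := ℝ)) ?_
  calc (2 : ℝ) • ((∑ i, p i • B i) * (∑ i, p i • B i))
      = ∑ i, ∑ j, (p i * p j) • (B i * B j + B j * B i) := by
        rw [two_smul]
        nth_rewrite 1 [hexp]
        rw [hexp']
        simp only [smul_add, Finset.sum_add_distrib]
    _ = (2 : ℝ) • ((∑ i, p i ^ 2) • 1) := by
        simp only [hB, ite_smul, zero_smul, smul_ite, smul_smul, smul_zero, Finset.sum_ite_eq,
          Finset.mem_univ, ↓reduceIte, Finset.sum_smul, Finset.smul_sum]
        ring_nf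

theorem sum_smul_mul_of_anticomm (X : R) (hB : ∀ i, B i * X = -(X * B i)) :
    (∑ i, p i • B i) * X = -(X * ∑ i, p i • B i) := by
  simp only [Finset.sum_mul, Finset.mul_sum, ← Finset.sum_neg_distrib, smul_mul_assoc,
    mul_smul_comm, hB, smul_neg]

end AnticommutingFamily

-- `A μ` stands for `iγ^μ`, so these are the relations `{γ^μ, γ^ν} = 2η^{μν}`.
def IsMajoranaCliffordFamily (A : Fin 4 → Matrix (Fin 4) (Fin 4) ℝ) : Prop :=
  ∀ μ ν, A μ * A ν + A ν * A μ =
    (-2 * Matrix.diagonal ![(1 : ℝ), -1, -1, -1] μ ν) • (1 : Matrix (Fin 4) (Fin 4) ℝ)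

namespace IsMajoranaCliffordFamily

variable {A : Fin 4 → Matrix (Fin 4) (Fin 4) ℝ}

theorem zero_mul_self (hA : IsMajoranaCliffordFamily A) : A 0 * A 0 = -1 := by
  refine smul_right_injective _ (two_ne_zero (α := ℝ)) ?_
  simp [two_smul, hA 0 0]

theorem succ_anticomm (hA : IsMajoranaCliffordFamily A) (i j : Fin 3) :
    A i.succ * A j.succ + A j.succ * A i.succ = (if i = j then 2 else 0 : ℝ) • 1 := by
  rw [hA]; congr 1
  fin_cases i <;> fin_cases j <;> simp

theorem succ_mul_self (hA : IsMajoranaCliffordFamily A) (i : Fin 3) : A i.succ * A i.succ = 1 := by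
  refine smul_right_injective _ (two_ne_zero (α := ℝ)) ?_
  simpa [two_smul] using hA.succ_anticomm i i

theorem succ_mul_zero (hA : IsMajoranaCliffordFamily A) (i : Fin 3) :
    A i.succ * A 0 = -(A 0 * A i.succ) :=
  eq_neg_of_add_eq_zero_left (by simpa [Fin.succ_ne_zero] using hA i.succ 0)

theorem transpose_zero (hA : IsMajoranaCliffordFamily A) (horth : (A 0)ᵀ * A 0 = 1) :
    (A 0)ᵀ = -A 0 :=
  left_inv_eq_right_inv horth (by rw [mul_neg, hA.zero_mul_self, neg_neg])

theorem transpose_succ (hA : IsMajoranaCliffordFamily A) (i : Fin 3)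
    (horth : (A i.succ)ᵀ * A i.succ = 1) : (A i.succ)ᵀ = A i.succ :=
  left_inv_eq_right_inv horth (hA.succ_mul_self i)

theorem transpose_neg_sum_mul_zero (hA : IsMajoranaCliffordFamily A)
    (horth : ∀ μ, (A μ)ᵀ * A μ = 1) (p : Fin 3 → ℝ) :
    (-((∑ i, p i • A i.succ) * A 0))ᵀ = -((∑ i, p i • A i.succ) * A 0) := by
  have hsymm : (∑ i, p i • A i.succ)ᵀ = ∑ i, p i • A i.succ := by
    simp only [transpose_sum, transpose_smul, hA.transpose_succ _ (horth _)]
  rw [transpose_neg, transpose_mul, hsymm, hA.transpose_zero (horth 0), neg_mul,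
    sum_smul_mul_of_anticomm _ _ _ hA.succ_mul_zero]

theorem neg_sum_mul_zero_mul_self (hA : IsMajoranaCliffordFamily A) (p : Fin 3 → ℝ) :
    -((∑ i, p i • A i.succ) * A 0) * -((∑ i, p i • A i.succ) * A 0) = (∑ i, p i ^ 2) • 1 := by
  rw [neg_mul_self_of_anticomm (sum_smul_mul_of_anticomm _ _ _ hA.succ_mul_zero),
    sum_smul_mul_self_of_anticomm _ _ hA.succ_anticomm, hA.zero_mul_self]
  simp

end IsMajoranaCliffordFamily

theorem sq_sqrt_add_div_add_sq_sqrt_sub_div {E m : ℝ} (hE : 0 < E) (hm : |m| ≤ E) :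
    √((E + m) / (2 * E)) ^ 2 + √((E - m) / (2 * E)) ^ 2 = 1 := by
  have ⟨hlo, hhi⟩ := abs_le.mp hm
  rw [Real.sq_sqrt (div_nonneg (by linarith) (by positivity)),
    Real.sq_sqrt (div_nonneg (by linarith) (by positivity))]
  field_simp
  ring

theorem stmt_8_general (A : Fin 4 → Matrix (Fin 4) (Fin 4) ℝ)
    (hcl : ∀ μ ν, A μ * A ν + A ν * A μ =
      (-2 * Matrix.diagonal ![(1 : ℝ), -1, -1, -1] μ ν) • (1 : Matrix (Fin 4) (Fin 4) ℝ))
    (horth : ∀ μ, (A μ)ᵀ * A μ = 1)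
    (p : Fin 3 → ℝ) (hp : p ≠ 0) (m : ℝ)
    (np Ep a b : ℝ)
    (hnp : np = Real.sqrt (∑ i, p i ^ 2))
    (hEp : Ep = Real.sqrt (np ^ 2 + m ^ 2))
    (ha : a = Real.sqrt ((Ep + m) / (2 * Ep)))
    (hb : b = Real.sqrt ((Ep - m) / (2 * Ep)))
    (C : Matrix (Fin 4) (Fin 4) ℝ)
    -- `C = (p·γ)γ⁰ = -(Σ pₖ iγᵏ)(iγ⁰)` as a real matrix
    (hC : C = -((∑ i : Fin 3, p i • A i.succ) * A 0)) :
    (Matrix.fromBlocks (a • 1) (-((b / np) • C)) ((b / np) • C) (a • 1))ᵀ *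
      Matrix.fromBlocks (a • 1) (-((b / np) • C)) ((b / np) • C) (a • 1) = 1 := by
  have hp2 : 0 < ∑ i, p i ^ 2 := by
    obtain ⟨i, hi⟩ := Function.ne_iff.mp hp
    exact Finset.sum_pos' (fun j _ => sq_nonneg (p j))
      ⟨i, Finset.mem_univ i, pow_two_pos_of_ne_zero hi⟩
  have hnp2 : np ^ 2 = ∑ i, p i ^ 2 := hnp ▸ Real.sq_sqrt hp2.le
  have hEp_pos : 0 < Ep := hEp ▸ Real.sqrt_pos.mpr (by nlinarith)
  have hab : a ^ 2 + b ^ 2 = 1 := by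
    rw [ha, hb]
    exact sq_sqrt_add_div_add_sq_sqrt_sub_div hEp_pos
      (hEp ▸ Real.abs_le_sqrt (le_add_of_nonneg_left (sq_nonneg np)))
  have hCT : Cᵀ = C := hC ▸ IsMajoranaCliffordFamily.transpose_neg_sum_mul_zero hcl horth p
  have hCC : C * C = np ^ 2 • 1 :=
    hC ▸ hnp2 ▸ IsMajoranaCliffordFamily.neg_sum_mul_zero_mul_self hcl p
  have hnp0 : np ≠ 0 := (hnp ▸ Real.sqrt_pos.mpr hp2).ne'
  have hcoef : a ^ 2 + b / np * (b / np) * np ^ 2 = 1 := by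
    field_simp
    linarith
  refine transpose_fromBlocks_rotation_mul_self a _ (by rw [transpose_smul, hCT]) ?_
  rw [smul_mul_smul_comm, hCC, smul_smul, ← add_smul, hcoef, one_smul]

theorem stmt_8 (A : Fin 4 → Matrix (Fin 4) (Fin 4) ℝ)
    (hcl : ∀ μ ν, A μ * A ν + A ν * A μ =
      (-2 * Matrix.diagonal ![(1 : ℝ), -1, -1, -1] μ ν) • (1 : Matrix (Fin 4) (Fin 4) ℝ))
    (horth : ∀ μ, (A μ)ᵀ * A μ = 1)
    (p : Fin 3 → ℝ) (hp : p ≠ 0) (m : ℝ) (hm : 0 ≤ m)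
    (np Ep a b : ℝ)
    (hnp : np = Real.sqrt (∑ i, p i ^ 2))
    (hEp : Ep = Real.sqrt (np ^ 2 + m ^ 2))
    (ha : a = Real.sqrt ((Ep + m) / (2 * Ep)))
    (hb : b = Real.sqrt ((Ep - m) / (2 * Ep)))
    (C : Matrix (Fin 4) (Fin 4) ℝ)
    -- `C = (p·γ)γ⁰ = -(Σ pₖ iγᵏ)(iγ⁰)` as a real matrix
    (hC : C = -((∑ i : Fin 3, p i • A i.succ) * A 0)) :
    (Matrix.fromBlocks (a • 1) (-((b / np) • C)) ((b / np) • C) (a • 1))ᵀ *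
      Matrix.fromBlocks (a • 1) (-((b / np) • C)) ((b / np) • C) (a • 1) = 1 :=
  stmt_8_general A hcl horth p hp m np Ep a b hnp hEp ha hb C hC
end
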